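/- Let g₁, g₂: X* → X* be morphisms and let x ∈ X be a letter such that g₁^ω(x) and g₂^ω(x) exist. Suppose g_i^ω(x) = w b_i ⋯ for i = 1, 2, where w ∈ X*, b₁, b₂ ∈ X and b₁ ≠ b₂. Then for any finite sequence i₁, …, i_k ∈ {1, 2}, either the word g_{i_k} ∘ ⋯ ∘ g_{i₁}(x) is a prefix of w, or it has w b_{i_k} as a prefix. -/
import Mathlib


open Filter Set

variable {X : Type*}

/-- Apply the morphism with letter images `g` to a word. -/
def applyM (g : X → List X) (w : List X) : List X := w.flatMap g

/-- `iterM g k w` is `g^k(w)`. -/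
def iterM (g : X → List X) (k : ℕ) (w : List X) : List X := (applyM g)^[k] w

/-- The letter map of the composition `g ∘ h` (first `h`, then `g`). -/
def compM (g h : X → List X) : X → List X := fun a => applyM g (h a)

/-- The letter map of the power `g^k`. -/
def powM (g : X → List X) (k : ℕ) : X → List X := fun a => iterM g k [a]

/-- A morphism is primitive if some power maps every letter to a word containing every letter. -/
def Primitive (g : X → List X) : Prop := ∃ k : ℕ, 0 < k ∧ ∀ a b : X, a ∈ iterM g k [b]

/-- `Mg g` is the maximal length of the image of a letter. -/
def Mg [Fintype X] (g : X → List X) : ℕ := Finset.univ.sup fun x => (g x).length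

/-- A morphism is growing if the lengths of iterated images of every letter tend to infinity. -/
def Growing (g : X → List X) : Prop :=
  ∀ x : X, Tendsto (fun i => (iterM g i [x]).length) atTop atTop

/-- `w` is a (finite) prefix of the infinite word `s`. -/
def IsPrefI (w : List X) (s : ℕ → X) : Prop := ∀ i (h : i < w.length), w[i]'h = s i

/-- `v` is a factor of the infinite word `s`. -/
def IsFactorI (v : List X) (s : ℕ → X) : Prop :=
  ∃ j : ℕ, ∀ i (h : i < v.length), v[i]'h = s (j + i)

/-- `g^ω(x)` exists. -/
def OmegaExists (g : X → List X) (x : X) : Prop :=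
  [x] <+: g x ∧ Tendsto (fun i => (iterM g i [x]).length) atTop atTop

/-- `s = g^ω(x)`. -/
def IsOmega (g : X → List X) (x : X) (s : ℕ → X) : Prop :=
  OmegaExists g x ∧ ∀ i : ℕ, IsPrefI (iterM g i [x]) s

/-- `s = u^ω` for the nonempty word `u`. -/
def IsPeriodicWord (s : ℕ → X) (u : List X) : Prop :=
  u ≠ [] ∧ ∀ (i : ℕ) (h : i % u.length < u.length), s i = u[i % u.length]'h

/-- A morphism is looping. -/
def Looping (g : X → List X) : Prop :=
  ∃ k : ℕ, 0 < k ∧ ∃ x : X, ∃ u : List X, ∃ s : ℕ → X,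
    IsOmega (powM g k) x s ∧ IsPeriodicWord s u

/-- A morphism is loop-free if it is not looping. -/
def LoopFree (g : X → List X) : Prop := ¬ Looping g

/-- `p` is a period of `u`. -/
def HasPeriod (u : List X) (p : ℕ) : Prop :=
  0 < p ∧ ∀ i : ℕ, i + p < u.length → u[i + p]? = u[i]?

/-- The smallest period of `u`. -/
noncomputable def PER (u : List X) : ℕ := sInf {p | HasPeriod u p}

/-- A primitive word: nonempty and not a proper power of a shorter word. -/
def PrimitiveWord (u : List X) : Prop :=
  u ≠ [] ∧ ¬∃ (v : List X) (j : ℕ), 2 ≤ j ∧ v.length < u.length ∧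
    u = (List.replicate j v).flatten

/-- `COMP g h` : the set of words whose images under `g` and `h` are prefix-comparable. -/
def COMP (g h : X → List X) : Set (List X) :=
  {w | ∃ u₁ u₂ : List X, applyM g w ++ u₁ = applyM h w ++ u₂}

/-- `BAL g h`. -/
noncomputable def BAL (g h : X → List X) : ℕ∞ :=
  ⨆ (x : X) (k : ℕ),
    ((((applyM g (iterM g k [x])).length : ℤ) -
      ((applyM h (iterM g k [x])).length : ℤ)).natAbs : ℕ∞)

/-- The set of factors of length `q` of the word `w`. -/
def Fq (q : ℕ) (w : List X) : Set (List X) := {v | v.length = q ∧ v <:+: w}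

/-- The set of factors of length `q` of words of `L`. -/
def FqL (q : ℕ) (L : Set (List X)) : Set (List X) := ⋃ w ∈ L, Fq q w

/-- `A n = ⌊9 n³ √(n log n)⌋`. -/
noncomputable def Abound (n : ℕ) : ℕ := ⌊9 * (n : ℝ)^3 * Real.sqrt (n * Real.log n)⌋₊

section Aux
variable {X : Type*}

lemma applyM_append (g : X → List X) (u v : List X) :
    applyM g (u ++ v) = applyM g u ++ applyM g v := by
  simp [applyM]

lemma applyM_prefix (g : X → List X) {u v : List X} (h : u <+: v) :
    applyM g u <+: applyM g v := by
  obtain ⟨t, rfl⟩ := h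
  exact ⟨applyM g t, (applyM_append g u t).symm⟩

lemma iterM_succ' (g : X → List X) (n : ℕ) (u : List X) :
    iterM g (n + 1) u = applyM g (iterM g n u) := by
  simp [iterM, Function.iterate_succ_apply']

lemma iterM_prefix (g : X → List X) {u v : List X} (h : u <+: v) (n : ℕ) :
    iterM g n u <+: iterM g n v := by
  induction n with
  | zero => simpa [iterM] using h
  | succ n ih => rw [iterM_succ', iterM_succ']; exact applyM_prefix g ih

lemma prefI_mono {u v : List X} {s : ℕ → X} (h : u <+: v) (hv : IsPrefI v s) :
    IsPrefI u s := by
  intro i hi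
  obtain ⟨t, rfl⟩ := h
  rw [← hv i (by simp only [List.length_append]; omega)]
  exact (List.getElem_append_left hi).symm

lemma prefI_comp {u v : List X} {s : ℕ → X} (hu : IsPrefI u s) (hv : IsPrefI v s)
    (h : u.length ≤ v.length) : u <+: v := by
  rw [List.prefix_iff_eq_take]
  apply List.ext_getElem
  · simp [Nat.min_eq_left h]
  · intro i h1 h2
    have h3 : i < v.length := lt_of_lt_of_le h1 h
    rw [List.getElem_take]
    rw [hu i h1, hv i h3]

end Aux

/-- Let `G 0, G 1` be morphisms with `(G i)^ω(x) = s i`, where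
`s i = w ++ [b i] ++ ⋯` and `b 0 ≠ b 1`.  Then for any nonempty sequence
`l = [i₁, …, i_k]` of indices, `G i_k ∘ ⋯ ∘ G i₁ (x)` is a prefix of `w` or
has `w ++ [b i_k]` as a prefix. -/
theorem compositions_prefix_dichotomy {X : Type*}
    (G : Fin 2 → X → List X) (x : X) (s : Fin 2 → ℕ → X)
    (hs : ∀ i : Fin 2, IsOmega (G i) x (s i))
    (w : List X) (b : Fin 2 → X) (hb : b 0 ≠ b 1)
    (hpref : ∀ i : Fin 2, IsPrefI (w ++ [b i]) (s i)) :
    ∀ (l : List (Fin 2)) (hl : l ≠ []),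
      (l.foldl (fun v i => applyM (G i) v) [x]) <+: w ∨
        (w ++ [b (l.getLast hl)]) <+: (l.foldl (fun v i => applyM (G i) v) [x]) := by
  classical
  -- basic facts
  have hx0 : ∀ j : Fin 2, s j 0 = x := by
    intro j
    have h := (hs j).2 0
    simp only [iterM, Function.iterate_zero, id] at h
    exact (h 0 (by simp)).symm
  have hprefwb : ∀ j : Fin 2, IsPrefI (w ++ [b j]) (s j) := hpref
  have hprefw : ∀ j : Fin 2, IsPrefI w (s j) := fun j =>
    prefI_mono ⟨[b j], rfl⟩ (hprefwb j)
  have hwne : w ≠ [] := by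
    intro h
    subst h
    have h0 := hpref 0 0 (by simp)
    have h1 := hpref 1 0 (by simp)
    simp only [List.nil_append, List.getElem_singleton] at h0 h1
    exact hb (by rw [h0, h1, hx0 0, hx0 1])
  have hxw : [x] <+: w := by
    obtain ⟨c, t, rfl⟩ := List.exists_cons_of_ne_nil hwne
    have hc : c = x := by
      have := hprefw 0 0 (by simp)
      simpa [hx0 0] using this
    exact ⟨t, by rw [hc]; rfl⟩
  -- prefixes of s j are closed under applyM (G j)
  have hP : ∀ (j : Fin 2) (u : List X), IsPrefI u (s j) →
      IsPrefI (applyM (G j) u) (s j) := by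
    intro j u hu
    obtain ⟨n, hn⟩ := ((hs j).1.2.eventually_ge_atTop u.length).exists
    have h1 : IsPrefI (iterM (G j) n [x]) (s j) := (hs j).2 n
    have h2 : u <+: iterM (G j) n [x] := prefI_comp hu h1 hn
    have h3 : applyM (G j) u <+: iterM (G j) (n + 1) [x] := by
      rw [iterM_succ']; exact applyM_prefix (G j) h2
    exact prefI_mono h3 ((hs j).2 (n + 1))
  -- key claim: w ++ [b j] is a prefix of G j (w)
  have hC : ∀ j : Fin 2, w ++ [b j] <+: applyM (G j) w := by
    intro j
    have hPw : IsPrefI (applyM (G j) w) (s j) := hP j w (hprefw j)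
    by_contra hcon
    have hlen : (applyM (G j) w).length ≤ w.length := by
      by_contra hl
      exact hcon (prefI_comp (hprefwb j) hPw
        (by simp only [List.length_append, List.length_singleton]; omega))
    have hwpref : applyM (G j) w <+: w := prefI_comp hPw (hprefw j) hlen
    have hiter : ∀ n, iterM (G j) n w <+: w := by
      intro n
      induction n with
      | zero => simp [iterM]
      | succ n ih =>
        rw [iterM_succ']
        exact (applyM_prefix (G j) ih).trans hwpref
    obtain ⟨n, hn⟩ := ((hs j).1.2.eventually_ge_atTop (w.length + 1)).exists
    have h4 : (iterM (G j) n [x]).length ≤ (iterM (G j) n w).length :=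
      (iterM_prefix (G j) hxw n).length_le
    have h5 : (iterM (G j) n w).length ≤ w.length := (hiter n).length_le
    omega
  -- main step lemma
  have hM : ∀ (j : Fin 2) (u : List X),
      (u <+: w ∨ ∃ i : Fin 2, w ++ [b i] <+: u) →
      (applyM (G j) u <+: w ∨ w ++ [b j] <+: applyM (G j) u) := by
    intro j u hu
    rcases hu with hu | ⟨i, hu⟩
    · have h1 : IsPrefI (applyM (G j) u) (s j) :=
        hP j u (prefI_mono hu (hprefw j))
      by_cases hl : (applyM (G j) u).length ≤ w.length
      · exact Or.inl (prefI_comp h1 (hprefw j) hl)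
      · refine Or.inr (prefI_comp (hprefwb j) h1 ?_)
        simp only [List.length_append, List.length_singleton]; omega
    · have h1 : w <+: u := (List.prefix_append w [b i]).trans hu
      exact Or.inr ((hC j).trans (applyM_prefix (G j) h1))
  -- induction over l (from the right)
  have main : ∀ l : List (Fin 2),
      (l.foldl (fun v i => applyM (G i) v) [x]) <+: w ∨
      ∃ hl : l ≠ [], (w ++ [b (l.getLast hl)]) <+:
        l.foldl (fun v i => applyM (G i) v) [x] := by
    intro l
    induction l using List.reverseRecOn with
    | nil => exact Or.inl (by simpa using hxw)
    | append_singleton l j ih =>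
      rw [List.foldl_append]
      simp only [List.foldl_cons, List.foldl_nil]
      have hprem : (l.foldl (fun v i => applyM (G i) v) [x]) <+: w ∨
          ∃ i : Fin 2, w ++ [b i] <+: l.foldl (fun v i => applyM (G i) v) [x] := by
        rcases ih with h | ⟨hl, h⟩
        · exact Or.inl h
        · exact Or.inr ⟨_, h⟩
      rcases hM j _ hprem with h | h
      · exact Or.inl h
      · refine Or.inr ⟨by simp, ?_⟩
        rwa [List.getLast_append]
  intro l hl
  rcases main l with h | ⟨_, h⟩
  · exact Or.inl h
  · exact Or.inr h
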